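/- Grounded extension: Let F = ⟨A, →⟩ be an AAF and let ℓ, m, n be positive integers with ℓ ≥ m and n ≥ m. Let G be the least fixed point of the monotone function D_n^m on 𝒫(A). Then G is ℓ-conflict-free, hence G is an ℓmn-complete extension of F; G is contained in every ℓmn-complete extension of F; and G equals the intersection of all ℓmn-complete extensions of F. In particular the set of ℓmn-complete extensions of F is nonempty and has a ⊆-least element. -/

import Mathlib

open Set

variable {A : Type*}

/-- Graded neutrality function `N_ℓ`: arguments not attacked by `ℓ` distinct members of `E`. -/
def gradedNeutrality (att : A → A → Prop) (ℓ : ℕ) (E : Set A) : Set A :=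
  {a | ¬ ∃ B : Finset A, B.card = ℓ ∧ (↑B : Set A) ⊆ E ∧ ∀ b ∈ B, att b a}

/-- Graded defense function `D_n^m = N_m ∘ N_n`. -/
def gradedDefense (att : A → A → Prop) (m n : ℕ) (E : Set A) : Set A :=
  gradedNeutrality att m (gradedNeutrality att n E)

/-- `E` is ℓ-conflict-free. -/
def IsConflictFree (att : A → A → Prop) (ℓ : ℕ) (E : Set A) : Prop :=
  E ⊆ gradedNeutrality att ℓ E

/-- `E` is ℓmn-admissible. -/
def IsAdmissible (att : A → A → Prop) (ℓ m n : ℕ) (E : Set A) : Prop :=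
  E ⊆ gradedNeutrality att ℓ E ∧ E ⊆ gradedDefense att m n E

/-- `E` is an ℓmn-complete extension. -/
def IsCompleteExt (att : A → A → Prop) (ℓ m n : ℕ) (E : Set A) : Prop :=
  E ⊆ gradedNeutrality att ℓ E ∧ E = gradedDefense att m n E

/-- `E` is an ℓmn-stable extension. -/
def IsStableExt (att : A → A → Prop) (ℓ m n : ℕ) (E : Set A) : Prop :=
  E = gradedNeutrality att n E ∧ E = gradedNeutrality att m E ∧
    E ⊆ gradedNeutrality att ℓ E

/-- The AAF is finitary: every argument has finitely many attackers. -/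
def IsFinitary (att : A → A → Prop) : Prop :=
  ∀ a : A, {b | att b a}.Finite

/-- `E_η^+`: arguments attacked by `η` distinct members of `E`. -/
def rangePlus (att : A → A → Prop) (η : ℕ) (E : Set A) : Set A :=
  {a | ∃ B : Finset A, B.card = η ∧ (↑B : Set A) ⊆ E ∧ ∀ b ∈ B, att b a}

/-- The range `E ∪ E_η^+` of `E`. -/
def rangeOf (att : A → A → Prop) (η : ℕ) (E : Set A) : Set A :=
  E ∪ rangePlus att η E

/-- Reduced meet of the family `X` modulo the ultrafilter `D`. -/
def reducedMeet {I : Type*} (D : Ultrafilter I) (X : I → Set A) : Set A :=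
  {a | {i | a ∈ X i} ∈ D}

/-- `L` is the least fixed point of `f` containing `E`. -/
def IsLfpOver (f : Set A → Set A) (E L : Set A) : Prop :=
  f L = L ∧ E ⊆ L ∧ ∀ L', f L' = L' → E ⊆ L' → L ⊆ L'

/-- `r` is well-founded on `S`: there is no infinite `r`-decreasing sequence in `S`. -/
def WellFoundedOnSet (r : A → A → Prop) (S : Set A) : Prop :=
  ¬ ∃ f : ℕ → A, (∀ i, f i ∈ S) ∧ ∀ i, r (f (i + 1)) (f i)

lemma neut_anti' (att : A → A → Prop) (η : ℕ) {E E' : Set A} (h : E ⊆ E') :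
    gradedNeutrality att η E' ⊆ gradedNeutrality att η E := by
  rintro a ha ⟨B, hc, hBE, hatt⟩
  exact ha ⟨B, hc, hBE.trans h, hatt⟩

lemma neut_shrink' (att : A → A → Prop) {m n : ℕ} (hmn : m ≤ n) {S E : Set A}
    (hES : E ⊆ S) : gradedNeutrality att m S ⊆ gradedNeutrality att n E := by
  rintro a ha ⟨B, hc, hBE, hatt⟩
  obtain ⟨C, hCB, hCc⟩ := Finset.exists_subset_card_eq (s := B) (hc ▸ hmn)
  exact ha ⟨C, hCc, fun x hx => hES (hBE (Finset.coe_subset.mpr hCB hx)),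
    fun b hb => hatt b (hCB hb)⟩

/-- Grounded extension: if `ℓ ≥ m` and `n ≥ m`, the least fixed point `G` of `D_n^m` is
ℓ-conflict-free, hence an ℓmn-complete extension; it is contained in every ℓmn-complete
extension and equals their intersection; in particular there is a ⊆-least ℓmn-complete
extension. -/
theorem grounded_extension {A : Type*} [Nonempty A] (att : A → A → Prop)
    (ℓ m n : ℕ) (hℓ : 0 < ℓ) (hm : 0 < m) (hn : 0 < n)
    (hml : m ≤ ℓ) (hmn : m ≤ n)
    (G : Set A)
    (hG : gradedDefense att m n G = G ∧
      ∀ L : Set A, gradedDefense att m n L = L → G ⊆ L) :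
    IsConflictFree att ℓ G ∧
    IsCompleteExt att ℓ m n G ∧
    (∀ E : Set A, IsCompleteExt att ℓ m n E → G ⊆ E) ∧
    G = ⋂₀ {E : Set A | IsCompleteExt att ℓ m n E} ∧
    (∃ L : Set A, IsCompleteExt att ℓ m n L ∧
      ∀ E : Set A, IsCompleteExt att ℓ m n E → L ⊆ E) := by
  obtain ⟨hfix, hleast⟩ := hG
  have mono : Monotone (gradedDefense att m n) := fun E E' h =>
    neut_anti' att m (neut_anti' att n h)
  set f : Set A →o Set A := ⟨gradedDefense att m n, mono⟩ with hf
  have hGle : ∀ X : Set A, gradedDefense att m n X ⊆ X → G ⊆ X := by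
    intro X hX
    have h1 : G ⊆ OrderHom.lfp f := hleast _ (OrderHom.map_lfp f)
    exact h1.trans (OrderHom.lfp_le f hX)
  set X := G ∩ gradedNeutrality att n G with hXdef
  have hGeq : G = gradedNeutrality att m (gradedNeutrality att n G) := hfix.symm
  have hGnX : G ⊆ gradedNeutrality att n X :=
    hGeq.trans_subset (neut_shrink' att hmn inter_subset_right)
  have hDX : gradedDefense att m n X ⊆ X :=
    subset_inter ((mono inter_subset_left).trans hfix.subset)
      (neut_shrink' att hmn hGnX)
  have hGn : G ⊆ gradedNeutrality att n G := (hGle X hDX).trans inter_subset_right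
  have hcf : IsConflictFree att ℓ G :=
    hGeq.trans_subset (neut_shrink' att hml hGn)
  have hcomp : IsCompleteExt att ℓ m n G := ⟨hcf, hfix.symm⟩
  have hmin : ∀ E : Set A, IsCompleteExt att ℓ m n E → G ⊆ E :=
    fun E hE => hleast E hE.2.symm
  refine ⟨hcf, hcomp, hmin, ?_, G, hcomp, hmin⟩
  exact subset_antisymm (fun a ha E hE => hmin E hE ha)
    (sInter_subset_of_mem hcomp)
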